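/- arXiv:2604.26210 — 7 statements merged into one kernel-verified Lean document; each statement's English description precedes it below -/
import Mathlib

section
/- Let l > 0 and a > 0, and define φ : ℝ → ℝ by φ(x) = exp(−x/l) + 2·sinh(x/l)/(exp(2a/l)+1). Then φ satisfies the AT2 phase-field equation l²·φ''(x) = φ(x) for all x, together with the boundary conditions φ(0) = 1 and φ'(a) = 0; moreover, φ is the unique twice continuously differentiable function on [0,a] satisfying these three conditions. -/
open Set Real

/-- Derivative of the AT2 profile. -/
lemma at2_hasDerivAt (l a : ℝ) (hl : l ≠ 0) (x : ℝ) :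
    HasDerivAt (fun x => Real.exp (-x / l) +
        2 * Real.sinh (x / l) / (Real.exp (2 * a / l) + 1))
      (-(1 / l) * Real.exp (-x / l)
        + 2 * ((1 / l) * Real.cosh (x / l)) / (Real.exp (2 * a / l) + 1)) x := by
  have h1 : HasDerivAt (fun x : ℝ => -x / l) (-(1 / l)) x := by
    simpa [neg_div] using ((hasDerivAt_id x).neg.div_const l)
  have h2 : HasDerivAt (fun x : ℝ => x / l) (1 / l) x := by
    simpa using ((hasDerivAt_id x).div_const l)
  have he : HasDerivAt (fun x => Real.exp (-x / l)) (Real.exp (-x / l) * (-(1 / l))) x :=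
    h1.exp
  have hs : HasDerivAt (fun x => Real.sinh (x / l)) (Real.cosh (x / l) * (1 / l)) x :=
    h2.sinh
  have := he.add (((hs.const_mul 2)).div_const (Real.exp (2 * a / l) + 1))
  refine this.congr_deriv ?_
  ring

/-- Second derivative of the AT2 profile derivative. -/
lemma at2_hasDerivAt2 (l a : ℝ) (hl : l ≠ 0) (x : ℝ) :
    HasDerivAt (fun x => -(1 / l) * Real.exp (-x / l)
        + 2 * ((1 / l) * Real.cosh (x / l)) / (Real.exp (2 * a / l) + 1))
      ((1 / l ^ 2) * Real.exp (-x / l)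
        + 2 * ((1 / l ^ 2) * Real.sinh (x / l)) / (Real.exp (2 * a / l) + 1)) x := by
  have h1 : HasDerivAt (fun x : ℝ => -x / l) (-(1 / l)) x := by
    simpa [neg_div] using ((hasDerivAt_id x).neg.div_const l)
  have h2 : HasDerivAt (fun x : ℝ => x / l) (1 / l) x := by
    simpa using ((hasDerivAt_id x).div_const l)
  have he : HasDerivAt (fun x => Real.exp (-x / l)) (Real.exp (-x / l) * (-(1 / l))) x :=
    h1.exp
  have hs : HasDerivAt (fun x => Real.cosh (x / l)) (Real.sinh (x / l) * (1 / l)) x :=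
    h2.cosh
  have := (he.const_mul (-(1 / l))).add
    ((((hs.const_mul (1 / l)).const_mul 2)).div_const (Real.exp (2 * a / l) + 1))
  refine this.congr_deriv ?_
  field_simp

/-- The AT2 phase-field profile
`φ(x) = exp(−x/l) + 2·sinh(x/l)/(exp(2a/l)+1)` satisfies `l²·φ'' = φ` on ℝ,
with `φ(0) = 1` and `φ'(a) = 0`, and it is the unique twice continuously
differentiable function on `[0,a]` satisfying these three conditions. -/
theorem at2_profile_solves_bvp_and_unique
    (l a : ℝ) (hl : 0 < l) (ha : 0 < a)
    (φ : ℝ → ℝ)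
    (hφ : φ = fun x => Real.exp (-x / l) +
      2 * Real.sinh (x / l) / (Real.exp (2 * a / l) + 1)) :
    (∀ x : ℝ, l ^ 2 * deriv (deriv φ) x = φ x) ∧
    φ 0 = 1 ∧
    deriv φ a = 0 ∧
    (∀ ψ : ℝ → ℝ, ContDiffOn ℝ 2 ψ (Set.Icc 0 a) →
      (∀ x ∈ Set.Icc 0 a,
        l ^ 2 * derivWithin (derivWithin ψ (Set.Icc 0 a)) (Set.Icc 0 a) x = ψ x) →
      ψ 0 = 1 →
      derivWithin ψ (Set.Icc 0 a) a = 0 →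
      Set.EqOn ψ φ (Set.Icc 0 a)) := by
  have hl0 : l ≠ 0 := ne_of_gt hl
  have hderiv : deriv φ = fun x => -(1 / l) * Real.exp (-x / l)
      + 2 * ((1 / l) * Real.cosh (x / l)) / (Real.exp (2 * a / l) + 1) := by
    funext x
    rw [hφ]
    exact (at2_hasDerivAt l a hl0 x).deriv
  have hderiv2 : deriv (deriv φ) = fun x => (1 / l ^ 2) * Real.exp (-x / l)
      + 2 * ((1 / l ^ 2) * Real.sinh (x / l)) / (Real.exp (2 * a / l) + 1) := by
    funext x
    rw [hderiv]
    exact (at2_hasDerivAt2 l a hl0 x).deriv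
  have hexp : (0:ℝ) < Real.exp (2 * a / l) + 1 := by positivity
  refine ⟨?_, ?_, ?_, ?_⟩
  · intro x
    rw [hderiv2, hφ]
    field_simp
  · rw [hφ]; simp
  · rw [hderiv]
    show -(1 / l) * Real.exp (-a / l)
      + 2 * ((1 / l) * Real.cosh (a / l)) / (Real.exp (2 * a / l) + 1) = 0
    have h2a : 2 * a / l = a / l + a / l := by ring
    have hna : -a / l = -(a / l) := by ring
    rw [Real.cosh_eq, h2a, hna, Real.exp_add, Real.exp_neg]
    have hu : Real.exp (a / l) ≠ 0 := Real.exp_ne_zero _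
    field_simp
    ring
  · intro ψ hψ hODE hB0 hBa
    have hUD : UniqueDiffOn ℝ (Icc (0:ℝ) a) := uniqueDiffOn_Icc ha
    set ψ' := derivWithin ψ (Icc (0:ℝ) a) with hψ'def
    have hD1 : ContDiffOn ℝ 1 ψ' (Icc 0 a) := hψ.derivWithin hUD (by norm_num)
    -- the ODE vector field
    set A : (ℝ × ℝ) →L[ℝ] (ℝ × ℝ) :=
      (ContinuousLinearMap.snd ℝ ℝ ℝ).prod ((l ^ 2)⁻¹ • ContinuousLinearMap.fst ℝ ℝ ℝ) with hA
    have hv : ∀ t ∈ Ioc (0:ℝ) a, LipschitzOnWith ‖A‖₊ (fun _p : ℝ × ℝ => A _p) Set.univ :=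
      fun _ _ => A.lipschitz.lipschitzOnWith
    -- the two trajectories
    set F : ℝ → ℝ × ℝ := fun t => (ψ t, ψ' t) with hF
    set c : ℝ := ψ a with hc
    set G : ℝ → ℝ × ℝ := fun t => (c * Real.cosh ((t - a) / l),
      c / l * Real.sinh ((t - a) / l)) with hG
    have hmem : ∀ t ∈ Ioc (0:ℝ) a, Icc (0:ℝ) a ∈ nhdsWithin t (Iic t) := by
      intro t ht
      refine mem_nhdsWithin.mpr ⟨Ioi 0, isOpen_Ioi, ht.1, ?_⟩
      rintro x ⟨hx1, hx2⟩
      exact ⟨le_of_lt hx1, le_trans hx2 ht.2⟩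
    have hF' : ∀ t ∈ Ioc (0:ℝ) a, HasDerivWithinAt F (A (F t)) (Iic t) t := by
      intro t ht
      have htI : t ∈ Icc (0:ℝ) a := ⟨le_of_lt ht.1, ht.2⟩
      have h1 : HasDerivWithinAt ψ (ψ' t) (Icc 0 a) t :=
        (hψ.differentiableOn (by norm_num) t htI).hasDerivWithinAt
      have h2 : HasDerivWithinAt ψ' (derivWithin ψ' (Icc 0 a) t) (Icc 0 a) t :=
        (hD1.differentiableOn (by norm_num) t htI).hasDerivWithinAt
      have h2' : derivWithin ψ' (Icc 0 a) t = ψ t / l ^ 2 := by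
        have := hODE t htI
        field_simp
        linarith [this]
      rw [h2'] at h2
      have := (h1.prodMk h2).mono_of_mem_nhdsWithin (hmem t ht)
      refine this.congr_deriv ?_
      simp [hA, hF, div_eq_inv_mul]
    have hG' : ∀ t : ℝ, HasDerivAt G (A (G t)) t := by
      intro t
      have hlin : HasDerivAt (fun t : ℝ => (t - a) / l) (1 / l) t := by
        simpa using ((hasDerivAt_id t).sub_const a).div_const l
      have hco : HasDerivAt (fun t => c * Real.cosh ((t - a) / l))
          (c * (Real.sinh ((t - a) / l) * (1 / l))) t :=
        (((Real.hasDerivAt_cosh _).comp t hlin)).const_mul c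
      have hsi : HasDerivAt (fun t => c / l * Real.sinh ((t - a) / l))
          (c / l * (Real.cosh ((t - a) / l) * (1 / l))) t :=
        (((Real.hasDerivAt_sinh _).comp t hlin)).const_mul (c / l)
      have := hco.prodMk hsi
      convert this using 1
      simp only [hA, hG, ContinuousLinearMap.prod_apply, ContinuousLinearMap.coe_snd',
        ContinuousLinearMap.smul_apply, ContinuousLinearMap.coe_fst']
      simp only [Prod.mk.injEq, smul_eq_mul]
      constructor
      · field_simp
      · field_simp
    have hFcont : ContinuousOn F (Icc 0 a) :=
      (hψ.continuousOn).prodMk (hD1.continuousOn)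
    have hGcont : ContinuousOn G (Icc 0 a) := (Continuous.continuousOn (by fun_prop))
    have hend : F a = G a := by
      simp [hF, hG, hBa, hc]
    have heq : Set.EqOn F G (Icc 0 a) :=
      ODE_solution_unique_of_mem_Icc_left hv hFcont hF'
        (fun t _ => Set.mem_univ _) hGcont
        (fun t ht => ((hG' t).hasDerivWithinAt)) (fun t _ => Set.mem_univ _) hend
    -- extract value of c
    have h0 : (0:ℝ) ∈ Icc (0:ℝ) a := ⟨le_refl _, le_of_lt ha⟩
    have hψ0 : ψ 0 = c * Real.cosh (a / l) := by
      have := congrArg Prod.fst (heq h0)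
      simpa [hF, hG, show (0 - a) / l = -(a / l) by ring, neg_div, Real.cosh_neg] using this
    have hcosh : Real.cosh (a / l) ≠ 0 := ne_of_gt (Real.cosh_pos _)
    have hcval : c * Real.cosh (a / l) = 1 := by rw [← hψ0, hB0]
    -- final algebra
    intro x hx
    have hψx : ψ x = c * Real.cosh ((x - a) / l) := congrArg Prod.fst (heq hx)
    rw [hψx, hφ]
    simp only
    have hu : Real.exp (a / l) ≠ 0 := Real.exp_ne_zero _
    have hvx : Real.exp (x / l) ≠ 0 := Real.exp_ne_zero _
    have hcv : c = 2 * Real.exp (a / l) / (Real.exp (a / l) ^ 2 + 1) := by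
      rw [Real.cosh_eq, Real.exp_neg] at hcval
      have hden : Real.exp (a / l) ^ 2 + 1 > 0 := by positivity
      field_simp at hcval ⊢
      linarith [hcval]
    have hxa : (x - a) / l = x / l - a / l := by ring
    have hnx : -x / l = -(x / l) := by ring
    have h2a : 2 * a / l = a / l + a / l := by ring
    rw [hcv, Real.cosh_eq, Real.sinh_eq, hxa, hnx, h2a]
    simp only [Real.exp_sub, Real.exp_neg, Real.exp_add, neg_sub]
    field_simp
    ring
end

section
/- Let l > 0 and a > 0, and define φ : [0,a] → ℝ by φ(x) = exp(−x/l) + 2·sinh(x/l)/(exp(2a/l)+1). Then 0 < φ(x) ≤ 1 for all x ∈ [0,a], and φ(x) < 1 for all x ∈ (0,a]. In particular, the AT2 phase-field profile is strictly positive everywhere (it does not have compact support), and it satisfies the bound constraints 0 ≤ φ ≤ 1 without any explicit enforcement. -/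
/-- The AT2 phase-field profile satisfies `0 < φ(x) ≤ 1` on `[0,a]`
and `φ(x) < 1` on `(0,a]`; in particular it is strictly positive everywhere
(no compact support) and satisfies the bound constraints `0 ≤ φ ≤ 1`. -/
theorem at2_profile_bounds
    (l a : ℝ) (hl : 0 < l) (ha : 0 < a)
    (φ : ℝ → ℝ)
    (hφ : φ = fun x => Real.exp (-x / l) +
      2 * Real.sinh (x / l) / (Real.exp (2 * a / l) + 1)) :
    (∀ x ∈ Set.Icc (0 : ℝ) a, 0 < φ x ∧ φ x ≤ 1) ∧
    (∀ x ∈ Set.Ioc (0 : ℝ) a, φ x < 1) := by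
  subst hφ
  have hE : (0:ℝ) < Real.exp (2 * a / l) + 1 := by positivity
  constructor
  · intro x hx
    obtain ⟨hx0, hxa⟩ := hx
    have ht0 : 0 ≤ x / l := div_nonneg hx0 hl.le
    have hta : x / l ≤ a / l := div_le_div_of_nonneg_right hxa hl.le
    constructor
    · have h1 : 0 < Real.exp (-x / l) := Real.exp_pos _
      have h2 : 0 ≤ Real.sinh (x / l) := by rw [← Real.sinh_zero]; exact Real.sinh_le_sinh.mpr ht0
      have h3 : 0 ≤ 2 * Real.sinh (x / l) / (Real.exp (2 * a / l) + 1) := by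
        positivity
      simp only
      linarith
    · have hem : Real.exp (-x / l) ≤ 1 := by
        apply Real.exp_le_one_iff.mpr
        simp [neg_div]; positivity
      have hexp : Real.exp (x / l) ≤ Real.exp (2 * a / l) :=
        Real.exp_le_exp.mpr (by
          have : a / l ≤ 2 * a / l := by
            rw [div_le_div_iff₀ hl hl]; nlinarith
          linarith)
      have hmul : Real.exp (-x / l) * Real.exp (x / l) = 1 := by
        rw [← Real.exp_add]; simp [neg_div]
      have key : 2 * Real.sinh (x / l) / (Real.exp (2 * a / l) + 1)
          ≤ 1 - Real.exp (-x / l) := by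
        rw [div_le_iff₀ hE, Real.sinh_eq, neg_div]
        have h1 : 0 < Real.exp (-x / l) := Real.exp_pos _
        rw [neg_div] at hem hmul
        nlinarith [mul_nonneg (sub_nonneg.2 hem) (sub_nonneg.2 hexp)]
      simp only
      linarith
  · intro x hx
    obtain ⟨hx0, hxa⟩ := hx
    have hem : Real.exp (-x / l) < 1 := by
      rw [Real.exp_lt_one_iff, neg_div]
      have : 0 < x / l := div_pos hx0 hl
      linarith
    have hexp : Real.exp (x / l) < Real.exp (2 * a / l) :=
      Real.exp_lt_exp.mpr (by
        rw [div_lt_div_iff₀ hl hl]; nlinarith)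
    have hmul : Real.exp (-x / l) * Real.exp (x / l) = 1 := by
      rw [← Real.exp_add]; simp [neg_div]
    have key : 2 * Real.sinh (x / l) / (Real.exp (2 * a / l) + 1)
        < 1 - Real.exp (-x / l) := by
      rw [div_lt_iff₀ hE, Real.sinh_eq, neg_div]
      have h1 : 0 < Real.exp (-x / l) := Real.exp_pos _
      rw [neg_div] at hem hmul
      nlinarith [mul_pos (sub_pos.2 hem) (sub_pos.2 hexp)]
    simp only
    linarith
end

section
/- Let l > 0 and a > 0, and define φ : [0,a] → ℝ by φ(x) = exp(−x/l) + 2·sinh(x/l)/(exp(2a/l)+1). Then φ'(x) < 0 for every x ∈ [0,a), so φ is strictly decreasing on [0,a], attaining its maximum value 1 at the crack center x = 0. -/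
/-- The AT2 phase-field profile has strictly negative derivative on
`[0,a)`, hence is strictly decreasing on `[0,a]`, attaining its maximum value 1
at the crack center `x = 0`. -/
theorem at2_profile_strictly_decreasing
    (l a : ℝ) (hl : 0 < l) (ha : 0 < a)
    (φ : ℝ → ℝ)
    (hφ : φ = fun x => Real.exp (-x / l) +
      2 * Real.sinh (x / l) / (Real.exp (2 * a / l) + 1)) :
    (∀ x ∈ Set.Ico (0 : ℝ) a, deriv φ x < 0) ∧
    StrictAntiOn φ (Set.Icc 0 a) ∧
    IsMaxOn φ (Set.Icc 0 a) 0 ∧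
    φ 0 = 1 := by
  set E : ℝ := Real.exp (2 * a / l) with hE
  have hE1 : 0 < E + 1 := by positivity
  have hderiv : ∀ x : ℝ, HasDerivAt φ
      (Real.exp (-x / l) * (-1 / l) + 2 * (Real.cosh (x / l) * (1 / l)) / (E + 1)) x := by
    intro x
    rw [hφ]
    have h1 : HasDerivAt (fun x : ℝ => -x / l) (-1 / l) x := by
      simpa using ((hasDerivAt_id x).neg.div_const l)
    have h2 : HasDerivAt (fun x : ℝ => x / l) (1 / l) x := by
      simpa using ((hasDerivAt_id x).div_const l)
    exact ((h1.exp).add ((((h2.sinh).const_mul 2)).div_const (E + 1)))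
  have hDneg : ∀ x ∈ Set.Ico (0 : ℝ) a,
      Real.exp (-x / l) * (-1 / l) + 2 * (Real.cosh (x / l) * (1 / l)) / (E + 1) < 0 := by
    intro x hx
    have hxa : x < a := hx.2
    have key : 2 * Real.cosh (x / l) < Real.exp (-x / l) * (E + 1) := by
      rw [Real.cosh_eq]
      have hmain : Real.exp (x / l) < Real.exp (-x / l) * E := by
        rw [hE, ← Real.exp_add]
        apply Real.exp_lt_exp.2
        have hdiv : x / l < a / l := (div_lt_div_iff_of_pos_right hl).2 hxa
        have e1 : -x / l = -(x / l) := neg_div _ _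
        have e2 : 2 * a / l = 2 * (a / l) := mul_div_assoc _ _ _
        linarith
      have h2 : Real.exp (-(x / l)) = Real.exp (-x / l) := by ring_nf
      nlinarith [Real.exp_pos (-(x/l))]
    have hlpos : 0 < 1 / l := by positivity
    have hEq : Real.exp (-x / l) * (-1 / l) + 2 * (Real.cosh (x / l) * (1 / l)) / (E + 1)
        = (1 / l) * (2 * Real.cosh (x / l) / (E + 1) - Real.exp (-x / l)) := by
      field_simp
      ring
    rw [hEq]
    apply mul_neg_of_pos_of_neg hlpos
    have : 2 * Real.cosh (x / l) / (E + 1) < Real.exp (-x / l) := by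
      rw [div_lt_iff₀ hE1]; linarith
    linarith
  have hd : ∀ x ∈ Set.Ico (0 : ℝ) a, deriv φ x < 0 := by
    intro x hx
    rw [(hderiv x).deriv]
    exact hDneg x hx
  have hanti : StrictAntiOn φ (Set.Icc 0 a) := by
    apply strictAntiOn_of_deriv_neg (convex_Icc 0 a)
    · rw [hφ]
      exact Continuous.continuousOn
        ((Real.continuous_exp.comp (continuous_id.neg.div_const l)).add
          ((continuous_const.mul (Real.continuous_sinh.comp (continuous_id.div_const l))).div_const (E + 1)))
    · intro x hx
      rw [interior_Icc] at hx
      exact hd x ⟨le_of_lt hx.1, hx.2⟩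
  refine ⟨hd, hanti, ?_, ?_⟩
  · intro x hx
    rcases eq_or_lt_of_le hx.1 with h0 | h0
    · simp [← h0]
    · exact le_of_lt (hanti (Set.left_mem_Icc.2 ha.le) hx h0)
  · rw [hφ]; simp
end

section
/- Let l > 0 and a > 0, and let φ(x) = exp(−x/l) + 2·sinh(x/l)/(exp(2a/l)+1) be the AT2 phase-field profile on [0,a]. Then the AT2 crack surface functional evaluated at φ satisfies (1/2)·∫₀ᵃ (φ(x)²/l + l·φ'(x)²) dx = (1/2)·tanh(a/l). Consequently, for fixed a > 0, this value converges to 1/2 (the surface measure of a half sharp crack) as l → 0⁺. -/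
open Filter Topology

lemma tanh_exp_form (t : ℝ) :
    Real.tanh t = (Real.exp (2*t) - 1) / (Real.exp (2*t) + 1) := by
  have h : Real.exp (2*t) = Real.exp t * Real.exp t := by
    rw [← Real.exp_add]; ring_nf
  have h2 : Real.exp t * Real.exp (-t) = 1 := by
    rw [← Real.exp_add]; simp
  have hp := Real.exp_pos t
  have hq := Real.exp_pos (2*t)
  rw [Real.tanh_eq_sinh_div_cosh, Real.sinh_eq, Real.cosh_eq]
  rw [div_eq_div_iff (by positivity) (by positivity)]
  nlinarith [h, h2]

lemma tanh_tendsto_one : Tendsto Real.tanh atTop (𝓝 1) := by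
  have hexp : Tendsto (fun t : ℝ => Real.exp (2*t)) atTop atTop :=
    Real.tendsto_exp_atTop.comp (tendsto_id.const_mul_atTop two_pos)
  have h1 : Tendsto (fun t : ℝ => Real.exp (2*t) + 1) atTop atTop :=
    tendsto_atTop_add_const_right _ 1 hexp
  have h2 : Tendsto (fun t : ℝ => 2 / (Real.exp (2*t) + 1)) atTop (𝓝 0) :=
    tendsto_const_nhds.div_atTop h1
  have h3 : Tendsto (fun t : ℝ => 1 - 2 / (Real.exp (2*t) + 1)) atTop (𝓝 (1 - 0)) :=
    tendsto_const_nhds.sub h2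
  simp only [sub_zero] at h3
  refine h3.congr fun t => ?_
  have hq := (Real.exp_pos (2*t))
  rw [tanh_exp_form]
  field_simp
  ring

open Filter Topology in
/-- The AT2 crack surface functional evaluated at the AT2
phase-field profile equals `(1/2)·tanh(a/l)`; consequently, for fixed `a > 0`,
this value tends to `1/2` (the surface measure of a half sharp crack) as
`l → 0⁺`. -/
theorem at2_crack_surface_energy_value
    (l a : ℝ) (hl : 0 < l) (ha : 0 < a)
    (φ : ℝ → ℝ)
    (hφ : φ = fun x => Real.exp (-x / l) +
      2 * Real.sinh (x / l) / (Real.exp (2 * a / l) + 1)) :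
    (1 / 2) * ∫ x in (0 : ℝ)..a, (φ x ^ 2 / l + l * (deriv φ x) ^ 2)
      = (1 / 2) * Real.tanh (a / l) ∧
    Tendsto (fun l' : ℝ => (1 / 2) * Real.tanh (a / l')) (𝓝[>] 0)
      (𝓝 (1 / 2)) := by
  constructor
  · subst hφ
    set u : ℝ := Real.exp (2 * a / l) with hu
    have hu0 : 0 < u := Real.exp_pos _
    have hk : (u + 1) ≠ 0 := by positivity
    have hl0 : l ≠ 0 := hl.ne'
    -- derivative of φ
    have hderiv : ∀ x : ℝ, HasDerivAt
        (fun x => Real.exp (-x / l) + 2 * Real.sinh (x / l) / (u + 1))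
        (Real.exp (-x / l) * (-1 / l) + 2 * (Real.cosh (x / l) * (1 / l)) / (u + 1)) x := by
      intro x
      have h1 : HasDerivAt (fun x : ℝ => -x / l) (-1 / l) x := by
        simpa using ((hasDerivAt_id x).neg.div_const l)
      have h2 : HasDerivAt (fun x : ℝ => x / l) (1 / l) x := by
        simpa using ((hasDerivAt_id x).div_const l)
      have hsinh : HasDerivAt (fun x : ℝ => Real.sinh (x / l))
          (Real.cosh (x / l) * (1 / l)) x := h2.sinh
      exact h1.exp.add ((hsinh.const_mul 2).div_const (u + 1))
    -- rewrite integrand in exp-form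
    have key : ∀ x : ℝ,
        ((fun x => Real.exp (-x / l) + 2 * Real.sinh (x / l) / (u + 1)) x) ^ 2 / l
          + l * (deriv (fun x => Real.exp (-x / l) + 2 * Real.sinh (x / l) / (u + 1)) x) ^ 2
        = 2 * (u ^ 2 * Real.exp (-2 * x / l) + Real.exp (2 * x / l)) / (l * (u + 1) ^ 2) := by
      intro x
      rw [(hderiv x).deriv]
      have e1 : Real.exp (-2 * x / l) = Real.exp (-x / l) ^ 2 := by
        rw [sq, ← Real.exp_add]; congr 1; ring
      have e2 : Real.exp (2 * x / l) = Real.exp (x / l) ^ 2 := by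
        rw [sq, ← Real.exp_add]; congr 1; ring
      have e3 : Real.exp (x / l) * Real.exp (-x / l) = 1 := by
        rw [← Real.exp_add, show x / l + -x / l = 0 by ring, Real.exp_zero]
      have e4 : Real.exp (-(x / l)) = Real.exp (-x / l) := by rw [neg_div]
      simp only [Real.sinh_eq, Real.cosh_eq, e1, e2, e4]
      field_simp
      nlinarith [e3, sq_nonneg (Real.exp (x/l)), sq_nonneg (Real.exp (-x/l))]
    simp only [key]
    -- antiderivative
    set F : ℝ → ℝ := fun x =>
      (-u ^ 2 * Real.exp (-2 * x / l) + Real.exp (2 * x / l)) / (u + 1) ^ 2 with hF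
    have hFd : ∀ x : ℝ, HasDerivAt F
        (2 * (u ^ 2 * Real.exp (-2 * x / l) + Real.exp (2 * x / l)) / (l * (u + 1) ^ 2)) x := by
      intro x
      have h3 : HasDerivAt (fun x : ℝ => -2 * x / l) (-2 / l) x := by
        simpa using (((hasDerivAt_id x).const_mul (-2 : ℝ)).div_const l)
      have h4 : HasDerivAt (fun x : ℝ => 2 * x / l) (2 / l) x := by
        simpa using (((hasDerivAt_id x).const_mul (2 : ℝ)).div_const l)
      have : HasDerivAt (fun x => (-u ^ 2 * Real.exp (-2 * x / l) + Real.exp (2 * x / l)) / (u + 1) ^ 2)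
          ((-u ^ 2 * (Real.exp (-2 * x / l) * (-2 / l)) + Real.exp (2 * x / l) * (2 / l)) / (u + 1) ^ 2) x :=
        ((h3.exp.const_mul (-u ^ 2)).add h4.exp).div_const ((u + 1) ^ 2)
      convert this using 1
      field_simp
    have hcont : Continuous (fun x : ℝ =>
        2 * (u ^ 2 * Real.exp (-2 * x / l) + Real.exp (2 * x / l)) / (l * (u + 1) ^ 2)) := by
      fun_prop
    rw [intervalIntegral.integral_eq_sub_of_hasDerivAt (fun x _ => hFd x)
      (hcont.intervalIntegrable 0 a)]
    -- evaluate F a - F 0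
    have ea : Real.exp (-2 * a / l) = 1 / u := by
      rw [hu, one_div, ← Real.exp_neg]; congr 1; ring
    have eA : Real.exp (2 * a / l) = u := rfl
    have htanh : Real.tanh (a / l) = (u - 1) / (u + 1) := by
      rw [tanh_exp_form (a / l)]
      congr 2 <;> (rw [hu]; congr 1; ring)
    rw [hF]
    simp only []
    rw [ea, eA, htanh]
    have : Real.exp (-2 * 0 / l) = 1 := by norm_num
    rw [this]
    have : Real.exp (2 * 0 / l) = 1 := by norm_num
    rw [this]
    field_simp
    ring
  · have hdiv : Tendsto (fun l' : ℝ => a / l') (𝓝[>] 0) atTop := by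
      have : Tendsto (fun x : ℝ => x⁻¹) (𝓝[>] 0) atTop := tendsto_inv_nhdsGT_zero
      simpa [div_eq_mul_inv] using this.const_mul_atTop ha
    have := (tanh_tendsto_one.comp hdiv).const_mul (1 / 2 : ℝ)
    simpa using this
end

section
/- Let l > 0 and a > 0, let φ(x) = exp(−x/l) + 2·sinh(x/l)/(exp(2a/l)+1) be the AT2 phase-field profile on [0,a], and let v : [0,a] → ℝ be any continuously differentiable function. Then ∫₀ᵃ (φ(x)·v(x)/l + l·φ'(x)·v'(x)) dx = tanh(a/l)·v(0). -/
/-- For the AT2 phase-field profile `φ` on `[0,a]` and any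
continuously differentiable `v : [0,a] → ℝ`,
`∫₀ᵃ (φ·v/l + l·φ'·v') dx = tanh(a/l)·v(0)`. -/
theorem at2_profile_weak_form_identity
    (l a : ℝ) (hl : 0 < l) (ha : 0 < a)
    (φ : ℝ → ℝ)
    (hφ : φ = fun x => Real.exp (-x / l) +
      2 * Real.sinh (x / l) / (Real.exp (2 * a / l) + 1))
    (v : ℝ → ℝ) (hv : ContDiffOn ℝ 1 v (Set.Icc 0 a)) :
    ∫ x in (0 : ℝ)..a,
        (φ x * v x / l + l * deriv φ x * derivWithin v (Set.Icc 0 a) x)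
      = Real.tanh (a / l) * v 0 := by
  have hl0 : l ≠ 0 := hl.ne'
  set c : ℝ := Real.exp (2 * a / l) + 1 with hc
  have hcpos : 0 < c := by positivity
  set D : ℝ → ℝ := fun x => Real.exp (-x / l) * (-1 / l) +
      2 * (Real.cosh (x / l) * (1 / l)) / c with hD
  have hφd : ∀ x : ℝ, HasDerivAt φ (D x) x := by
    intro x
    rw [hφ]
    have h0 : HasDerivAt (fun y : ℝ => -y / l) (-1 / l) x := by
      simpa using ((hasDerivAt_id x).neg.div_const l)
    have h1 : HasDerivAt (fun y : ℝ => Real.exp (-y / l))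
        (Real.exp (-x / l) * (-1 / l)) x := h0.exp
    have h2 : HasDerivAt (fun y : ℝ => y / l) (1 / l) x := by
      simpa using ((hasDerivAt_id x).div_const l)
    have h3 : HasDerivAt (fun y : ℝ => Real.sinh (y / l))
        (Real.cosh (x / l) * (1 / l)) x := h2.sinh
    exact h1.add ((h3.const_mul 2).div_const c)
  have hderiv_eq : deriv φ = D := funext fun x => (hφd x).deriv
  have hDd : ∀ x : ℝ, HasDerivAt D (φ x / (l * l)) x := by
    intro x
    have h0 : HasDerivAt (fun y : ℝ => -y / l) (-1 / l) x := by
      simpa using ((hasDerivAt_id x).neg.div_const l)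
    have h1 : HasDerivAt (fun y : ℝ => Real.exp (-y / l))
        (Real.exp (-x / l) * (-1 / l)) x := h0.exp
    have h2 : HasDerivAt (fun y : ℝ => y / l) (1 / l) x := by
      simpa using ((hasDerivAt_id x).div_const l)
    have h3 : HasDerivAt (fun y : ℝ => Real.cosh (y / l))
        (Real.sinh (x / l) * (1 / l)) x := h2.cosh
    have h4 : HasDerivAt D
        (Real.exp (-x / l) * (-1 / l) * (-1 / l) +
          2 * (Real.sinh (x / l) * (1 / l) * (1 / l)) / c) x :=
      (h1.mul_const (-1 / l)).add (((h3.mul_const (1 / l)).const_mul 2).div_const c)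
    convert h4 using 1
    rw [hφ]
    field_simp
  -- v within derivative facts
  have hudiff : UniqueDiffOn ℝ (Set.Icc (0:ℝ) a) := uniqueDiffOn_Icc ha
  have hvd : DifferentiableOn ℝ v (Set.Icc 0 a) := hv.differentiableOn one_ne_zero
  have hvcont : ContinuousOn (derivWithin v (Set.Icc 0 a)) (Set.Icc 0 a) :=
    hv.continuousOn_derivWithin hudiff le_rfl
  -- FTC for F x = l * D x * v x
  have hDcont : Continuous D := by
    apply Continuous.add
    · exact (Real.continuous_exp.comp (continuous_id.neg.div_const l)).mul continuous_const
    · exact Continuous.div_const (continuous_const.mul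
        ((Real.continuous_cosh.comp (continuous_id.div_const l)).mul continuous_const)) c
  have hFcont : ContinuousOn (fun x => l * D x * v x) (Set.Icc 0 a) :=
    ((continuous_const.mul hDcont).continuousOn).mul hv.continuousOn
  have key : (∫ x in (0:ℝ)..a,
      (φ x * v x / l + l * deriv φ x * derivWithin v (Set.Icc 0 a) x))
      = l * D a * v a - l * D 0 * v 0 := by
    apply intervalIntegral.integral_eq_sub_of_hasDeriv_right_of_le ha.le hFcont
    · intro x hx
      have hmem : Set.Icc (0:ℝ) a ∈ nhds x := Icc_mem_nhds hx.1 hx.2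
      have hvx : HasDerivAt v (derivWithin v (Set.Icc 0 a) x) x :=
        ((hvd x (Set.mem_Icc.2 ⟨hx.1.le, hx.2.le⟩)).hasDerivWithinAt).hasDerivAt hmem
      have hF : HasDerivAt (fun y => l * D y * v y)
          (l * (φ x / (l * l)) * v x + l * D x * derivWithin v (Set.Icc 0 a) x) x := by
        exact
          (((hDd x).const_mul l).mul hvx)
      have heq : φ x * v x / l + l * deriv φ x * derivWithin v (Set.Icc 0 a) x
          = l * (φ x / (l * l)) * v x + l * D x * derivWithin v (Set.Icc 0 a) x := by
        rw [hderiv_eq]; field_simp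
      rw [heq]
      exact hF.hasDerivWithinAt
    · apply ContinuousOn.intervalIntegrable
      rw [Set.uIcc_of_le ha.le, hderiv_eq]
      have hφcont : Continuous φ := by
        rw [hφ]
        exact (Real.continuous_exp.comp (continuous_id.neg.div_const l)).add
          (Continuous.div_const (continuous_const.mul
            (Real.continuous_sinh.comp (continuous_id.div_const l))) c)
      exact ((hφcont.continuousOn.mul hv.continuousOn).div_const l).add
        (((continuous_const.mul hDcont).continuousOn).mul hvcont)
  rw [key]
  have hexp : Real.exp (2 * a / l) = Real.exp (a / l) * Real.exp (a / l) := by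
    rw [← Real.exp_add]; ring_nf
  have hepos : Real.exp (a / l) ≠ 0 := (Real.exp_pos _).ne'
  have hDa : D a = 0 := by
    rw [hD]
    simp only
    rw [Real.cosh_eq, neg_div, Real.exp_neg, hc, hexp]
    field_simp
    ring
  have hD0 : l * D 0 * v 0 = -(Real.tanh (a / l) * v 0) := by
    rw [hD]
    simp only
    simp only [neg_zero, zero_div, Real.exp_zero, Real.cosh_zero]
    rw [Real.tanh_eq_sinh_div_cosh, Real.sinh_eq, Real.cosh_eq, neg_div, Real.exp_neg, hc, hexp]
    have hden : Real.exp (a / l) + (Real.exp (a / l))⁻¹ ≠ 0 := by positivity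
    field_simp
    ring
  rw [hDa, hD0]
  ring
end

section
/- Let l > 0 and a > 0, and let φ(x) = exp(−x/l) + 2·sinh(x/l)/(exp(2a/l)+1) be the AT2 phase-field profile on [0,a]. Then for every continuously differentiable function v : [0,a] → ℝ with v(0) = 1, one has (1/2)·∫₀ᵃ (v(x)²/l + l·v'(x)²) dx ≥ (1/2)·tanh(a/l), with equality if and only if v = φ on [0,a]. That is, φ is the unique minimizer of the AT2 crack surface functional among continuously differentiable functions with the Dirichlet condition v(0) = 1. -/
lemma at2_profile_cosh_form (l a x : ℝ) :
    Real.exp (-x / l) + 2 * Real.sinh (x / l) / (Real.exp (2 * a / l) + 1)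
      = Real.cosh ((a - x) / l) / Real.cosh (a / l) := by
  have hq : Real.exp (a / l) ≠ 0 := Real.exp_ne_zero _
  have hp : Real.exp (x / l) ≠ 0 := Real.exp_ne_zero _
  have hd : (0:ℝ) < Real.exp (2 * a / l) + 1 := by positivity
  have hc : (0:ℝ) < Real.cosh (a / l) := Real.cosh_pos _
  have e1 : Real.exp (-x / l) = (Real.exp (x / l))⁻¹ := by
    rw [show -x / l = -(x/l) by ring, Real.exp_neg]
  have e2 : Real.exp (-(x / l)) = (Real.exp (x / l))⁻¹ := by rw [Real.exp_neg]
  have e3 : Real.exp ((a - x) / l) = Real.exp (a / l) / Real.exp (x / l) := by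
    rw [show (a - x) / l = a / l - x / l by ring, Real.exp_sub]
  have e4 : Real.exp (-((a - x) / l)) = Real.exp (x / l) / Real.exp (a / l) := by
    rw [Real.exp_neg, e3, inv_div]
  have e5 : Real.exp (-(a / l)) = (Real.exp (a / l))⁻¹ := by rw [Real.exp_neg]
  have h2 : Real.exp (2 * a / l) = Real.exp (a / l) ^ 2 := by
    rw [show 2 * a / l = a / l + a / l by ring, Real.exp_add, sq]
  rw [Real.cosh_eq, Real.cosh_eq, Real.sinh_eq, e1, e2, e3, e4, e5, h2] at *
  field_simp
  ring

set_option maxHeartbeats 1000000 in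
/-- The AT2 phase-field profile `φ` is the unique minimizer of the
AT2 crack surface functional `Γ(v) = (1/2)·∫₀ᵃ (v²/l + l·(v')²) dx` among
continuously differentiable functions on `[0,a]` with `v(0) = 1`: every such `v`
satisfies `Γ(v) ≥ (1/2)·tanh(a/l)`, with equality iff `v = φ` on `[0,a]`. -/
theorem at2_profile_unique_minimizer
    (l a : ℝ) (hl : 0 < l) (ha : 0 < a)
    (φ : ℝ → ℝ)
    (hφ : φ = fun x => Real.exp (-x / l) +
      2 * Real.sinh (x / l) / (Real.exp (2 * a / l) + 1)) :
    ∀ v : ℝ → ℝ, ContDiffOn ℝ 1 v (Set.Icc 0 a) → v 0 = 1 →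
      ((1 / 2) * ∫ x in (0 : ℝ)..a,
          (v x ^ 2 / l + l * (derivWithin v (Set.Icc 0 a) x) ^ 2)
        ≥ (1 / 2) * Real.tanh (a / l)) ∧
      (((1 / 2) * ∫ x in (0 : ℝ)..a,
          (v x ^ 2 / l + l * (derivWithin v (Set.Icc 0 a) x) ^ 2)
        = (1 / 2) * Real.tanh (a / l)) ↔ Set.EqOn v φ (Set.Icc 0 a)) := by
  intro v hv hv0
  have hl0 : l ≠ 0 := hl.ne'
  set s : Set ℝ := Set.Icc (0:ℝ) a with hs
  have huds : UniqueDiffOn ℝ s := uniqueDiffOn_Icc ha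
  set v' : ℝ → ℝ := derivWithin v s with hv'def
  have hvc : ContinuousOn v s := hv.continuousOn
  have hv'c : ContinuousOn v' s := hv.continuousOn_derivWithin huds le_rfl
  have hcosh : ∀ t : ℝ, Real.cosh t ≠ 0 := fun t => (Real.cosh_pos t).ne'
  have hcoshpos : ∀ t : ℝ, 0 < Real.cosh t := Real.cosh_pos
  set g : ℝ → ℝ := fun x => Real.sinh ((a - x)/l) / Real.cosh ((a - x)/l) with hgdef
  have hlin : Continuous (fun y : ℝ => (a - y)/l) :=
    (continuous_const.sub continuous_id).div_const l
  have hgc : Continuous g := by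
    apply Continuous.div
    · exact Real.continuous_sinh.comp hlin
    · exact Real.continuous_cosh.comp hlin
    · exact fun x => hcosh _
  have hu : ∀ x : ℝ, HasDerivAt (fun y => (a - y)/l) (-1/l) x := by
    intro x
    have := ((hasDerivAt_const x a).sub (hasDerivAt_id x)).div_const l
    simpa using this
  have hcoshd : ∀ x : ℝ, HasDerivAt (fun y => Real.cosh ((a - y)/l))
      (Real.sinh ((a-x)/l) * (-1/l)) x :=
    fun x => (Real.hasDerivAt_cosh _).comp x (hu x)
  have hsinhd : ∀ x : ℝ, HasDerivAt (fun y => Real.sinh ((a - y)/l))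
      (Real.cosh ((a-x)/l) * (-1/l)) x :=
    fun x => (Real.hasDerivAt_sinh _).comp x (hu x)
  have hg' : ∀ x : ℝ, HasDerivAt g (-(1 - g x ^ 2)/l) x := by
    intro x
    have := (hsinhd x).div (hcoshd x) (hcosh _)
    refine this.congr_deriv (Eq.symm ?_)
    have hsq := Real.cosh_sq_sub_sinh_sq ((a-x)/l)
    have hc := hcosh ((a-x)/l)
    simp only [hgdef]
    field_simp
    linear_combination
  -- the profile in cosh form
  have hφeq : ∀ x : ℝ, φ x = Real.cosh ((a - x)/l) / Real.cosh (a/l) := by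
    intro x; rw [hφ]; exact at2_profile_cosh_form l a x
  set A : ℝ → ℝ := fun x => v x ^ 2 / l + l * v' x ^ 2 with hAdef
  set B : ℝ → ℝ := fun x => l * (v' x + v x * g x / l) ^ 2 with hBdef
  have hBnn : ∀ x, 0 ≤ B x := fun x => by rw [hBdef]; positivity
  have hAc : ContinuousOn A s := by
    apply ContinuousOn.add
    · exact (hvc.pow 2).div_const l
    · exact continuousOn_const.mul (hv'c.pow 2)
  have hBc : ContinuousOn B s := by
    apply ContinuousOn.mul continuousOn_const
    exact ((hv'c.add ((hvc.mul hgc.continuousOn).div_const l)).pow 2)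
  have huIcc : Set.uIcc (0:ℝ) a = s := Set.uIcc_of_le ha.le
  have hAint : IntervalIntegrable A MeasureTheory.volume 0 a :=
    (huIcc ▸ hAc).intervalIntegrable
  have hBint : IntervalIntegrable B MeasureTheory.volume 0 a :=
    (huIcc ▸ hBc).intervalIntegrable
  -- derivative of v at points of s
  have hvds : ∀ x ∈ s, HasDerivWithinAt v (v' x) s x := by
    intro x hx
    exact ((hv.differentiableOn one_ne_zero) x hx).hasDerivWithinAt
  have hvdi : ∀ x ∈ Set.Ioo 0 a, HasDerivAt v (v' x) x := by
    intro x hx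
    exact (hvds x (Set.mem_Icc.mpr ⟨hx.1.le, hx.2.le⟩)).hasDerivAt
      (Icc_mem_nhds hx.1 hx.2)
  -- FTC for F = -(v)^2 * g
  set F : ℝ → ℝ := fun x => -(v x)^2 * g x with hFdef
  have hFc : ContinuousOn F s := ((hvc.pow 2).neg.mul hgc.continuousOn)
  have hderiv : ∀ x ∈ Set.Ioo 0 a, HasDerivWithinAt F (A x - B x) (Set.Ioi x) x := by
    intro x hx
    have hvx := hvdi x hx
    have h1 : HasDerivAt (fun y => -(v y)^2) (-(2 * v x * v' x)) x := by
      have := (hvx.pow 2).neg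
      refine this.congr_deriv (Eq.symm ?_)
      push_cast
      ring
    have hFx : HasDerivAt F (-(2 * v x * v' x) * g x + -(v x)^2 * (-(1 - g x ^ 2)/l)) x :=
      h1.mul (hg' x)
    have : A x - B x = -(2 * v x * v' x) * g x + -(v x)^2 * (-(1 - g x ^ 2)/l) := by
      rw [hAdef, hBdef]
      field_simp
      ring
    rw [this]
    exact hFx.hasDerivWithinAt
  have hFTC : (∫ x in (0:ℝ)..a, (A x - B x)) = F a - F 0 :=
    intervalIntegral.integral_eq_sub_of_hasDeriv_right_of_le ha.le hFc hderiv
      (hAint.sub hBint)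
  have hga : g a = 0 := by rw [hgdef]; simp
  have hg0 : g 0 = Real.tanh (a/l) := by
    rw [hgdef, Real.tanh_eq_sinh_div_cosh]; norm_num
  have hkey : (∫ x in (0:ℝ)..a, (A x - B x)) = Real.tanh (a/l) := by
    rw [hFTC, hFdef]
    simp only [hga, hg0, hv0]
    ring
  have hIA : (∫ x in (0:ℝ)..a, A x)
      = Real.tanh (a/l) + ∫ x in (0:ℝ)..a, B x := by
    have := intervalIntegral.integral_sub hAint hBint
    rw [this] at hkey
    linarith
  have hIBnn : 0 ≤ ∫ x in (0:ℝ)..a, B x :=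
    intervalIntegral.integral_nonneg ha.le (fun u _ => hBnn u)
  constructor
  · rw [hIA]; linarith
  constructor
  · -- equality implies v = φ
    intro heq
    rw [hIA] at heq
    have hIB : (∫ x in (0:ℝ)..a, B x) = 0 := by linarith
    -- B vanishes on the interior
    have hBz : ∀ x ∈ Set.Ioo 0 a, B x = 0 := by
      intro x hx
      by_contra hne
      have hpos : 0 < B x := lt_of_le_of_ne (hBnn x) (Ne.symm hne)
      have hct : ContinuousAt B x :=
        hBc.continuousAt (Icc_mem_nhds hx.1 hx.2)
      have hev : ∀ᶠ y in nhds x, 0 < B y := hct (Ioi_mem_nhds hpos)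
      obtain ⟨ε, hε, hball⟩ := Metric.eventually_nhds_iff.mp hev
      set m : ℝ := min (x + ε) a with hm
      have hxm : x < m := lt_min (by linarith) hx.2
      have hsub : Set.Ioo x m ⊆ Function.support B ∩ Set.Ioc 0 a := by
        intro y hy
        refine ⟨?_, hx.1.trans hy.1, hy.2.le.trans (min_le_right _ _)⟩
        have : dist y x < ε := by
          rw [Real.dist_eq, abs_of_pos (by linarith [hy.1])]
          have := hy.2.trans_le (min_le_left _ _)
          linarith
        exact (hball this).ne'
      have hvol : 0 < MeasureTheory.volume (Function.support B ∩ Set.Ioc 0 a) := by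
        refine lt_of_lt_of_le ?_ (MeasureTheory.measure_mono hsub)
        rw [Real.volume_Ioo]
        simp [hxm]
      have hpos' : 0 < ∫ x in (0:ℝ)..a, B x := by
        rw [intervalIntegral.integral_pos_iff_support_of_nonneg_ae
          (Filter.Eventually.of_forall hBnn) hBint]
        exact ⟨ha, hvol⟩
      linarith
    -- quotient w = v / cosh((a-x)/l) is constant
    set w : ℝ → ℝ := fun x => v x / Real.cosh ((a - x)/l) with hwdef
    have hwc : ContinuousOn w s :=
      hvc.div ((Real.continuous_cosh.comp hlin).continuousOn)
        (fun x _ => hcosh _)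
    have hwd : ∀ x ∈ Set.Ioo 0 a, HasDerivAt w 0 x := by
      intro x hx
      have hvx := hvdi x hx
      have hzero : v' x + v x * g x / l = 0 := by
        have hbx := hBz x hx
        simp only [hBdef] at hbx
        have hsq : (v' x + v x * g x / l) ^ 2 = 0 := by
          rcases mul_eq_zero.mp hbx with h | h
          · exact absurd h hl0
          · exact h
        exact (pow_eq_zero_iff two_ne_zero).mp hsq
      have hdval := hvx.div (hcoshd x) (hcosh _)
      have hc := hcosh ((a-x)/l)
      have hval : (v' x * Real.cosh ((a-x)/l) - v x * (Real.sinh ((a-x)/l) * (-1/l)))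
          / Real.cosh ((a-x)/l) ^ 2 = 0 := by
        simp only [hgdef] at hzero
        field_simp at hzero ⊢
        linear_combination hzero
      exact hval ▸ hdval
    have hmono : MonotoneOn w s := by
      apply monotoneOn_of_deriv_nonneg (convex_Icc 0 a) hwc
      · intro x hx
        rw [interior_Icc] at hx
        exact (hwd x hx).differentiableAt.differentiableWithinAt
      · intro x hx
        rw [interior_Icc] at hx
        rw [(hwd x hx).deriv]
    have hanti : AntitoneOn w s := by
      apply antitoneOn_of_deriv_nonpos (convex_Icc 0 a) hwc
      · intro x hx
        rw [interior_Icc] at hx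
        exact (hwd x hx).differentiableAt.differentiableWithinAt
      · intro x hx
        rw [interior_Icc] at hx
        rw [(hwd x hx).deriv]
    have h0s : (0:ℝ) ∈ s := Set.mem_Icc.mpr ⟨le_refl 0, ha.le⟩
    intro x hx
    have hx0 : (0:ℝ) ≤ x := hx.1
    have hwx : w x = w 0 :=
      le_antisymm (hanti h0s hx hx0) (hmono h0s hx hx0)
    rw [hφeq x]
    rw [hwdef] at hwx
    simp only [hv0] at hwx
    have h1 : v x / Real.cosh ((a - x)/l) = 1 / Real.cosh ((a - 0)/l) := hwx
    rw [show a - 0 = a by ring] at h1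
    have hc1 := hcosh ((a-x)/l)
    have hc2 := hcosh (a/l)
    field_simp at h1 ⊢
    linarith
  · -- v = φ implies equality
    intro hEq
    have hbz : ∀ x ∈ s, B x = 0 := by
      intro x hx
      have hvd : v' x = derivWithin φ s x := derivWithin_congr hEq (hEq hx)
      have hφd : HasDerivAt φ (Real.sinh ((a-x)/l) * (-1/l) / Real.cosh (a/l)) x := by
        have h2 : HasDerivAt (fun y => Real.cosh ((a - y)/l) / Real.cosh (a/l))
            (Real.sinh ((a-x)/l) * (-1/l) / Real.cosh (a/l)) x :=
          (hcoshd x).div_const _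
        have : φ = fun y => Real.cosh ((a - y)/l) / Real.cosh (a/l) :=
          funext fun y => hφeq y
        rw [this]
        exact h2
      have hdw : derivWithin φ s x = Real.sinh ((a-x)/l) * (-1/l) / Real.cosh (a/l) :=
        (hφd.hasDerivWithinAt).derivWithin (huds x hx)
      have hc1 := hcosh ((a - x)/l)
      have hc2 := hcosh (a/l)
      simp only [hBdef, hgdef]
      rw [hvd, hdw, hEq hx, hφeq x]
      field_simp
      ring
    have hIB : (∫ x in (0:ℝ)..a, B x) = 0 := by
      have : Set.EqOn B (fun _ => (0:ℝ)) (Set.uIcc 0 a) := by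
        rw [huIcc]; exact fun x hx => hbz x hx
      rw [intervalIntegral.integral_congr this]
      simp
    rw [hIA, hIB]
    ring
end

section
/- Let l > 0 and a ≥ 2l, and let φ be the AT1 phase-field profile on [0,a], given by φ(x) = (1 − x/(2l))² for 0 ≤ x < 2l and φ(x) = 0 for 2l ≤ x ≤ a. Then for every continuously differentiable function v : [0,a] → ℝ with v(0) = 1 and v(x) ≥ 0 for all x ∈ [0,a], one has (3/8)·∫₀ᵃ (v(x)/l + l·v'(x)²) dx ≥ 1/2, and equality holds for v = φ. That is, φ minimizes the AT1 crack surface functional over the constrained admissible set determined by the Dirichlet condition v(0) = 1 and the lower bound v ≥ 0. -/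
open Set intervalIntegral

lemma at1_lower (l a : ℝ) (hl : 0 < l) (ha : 2 * l ≤ a)
    (v : ℝ → ℝ) (hv : ContDiffOn ℝ 1 v (Icc 0 a)) (hv0 : v 0 = 1)
    (hvnn : ∀ x ∈ Icc (0:ℝ) a, 0 ≤ v x) :
    (3 / 8) * ∫ x in (0:ℝ)..a,
        (v x / l + l * (derivWithin v (Icc 0 a) x) ^ 2) ≥ 1 / 2 := by
  have ha0 : 0 < a := by linarith
  have hmem0 : (0:ℝ) ∈ Icc (0:ℝ) a := ⟨le_refl 0, ha0.le⟩
  have hud : UniqueDiffOn ℝ (Icc (0:ℝ) a) := uniqueDiffOn_Icc ha0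
  set d := derivWithin v (Icc 0 a) with hd_def
  have hdcont : ContinuousOn d (Icc 0 a) := hv.continuousOn_derivWithin hud le_rfl
  have hvcont : ContinuousOn v (Icc 0 a) := hv.continuousOn
  obtain ⟨x₀, hx₀, hminOn⟩ := isCompact_Icc.exists_isMinOn ⟨0, hmem0⟩ hvcont
  set m := v x₀ with hm_def
  have hm0 : 0 ≤ m := hvnn x₀ hx₀
  have hm1 : m ≤ 1 := by
    have := hminOn hmem0
    simpa [hv0] using this
  have hmle : ∀ x ∈ Icc (0:ℝ) a, m ≤ v x := fun x hx => hminOn hx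
  -- w and antiderivative H
  set w := fun x => v x - m with hw_def
  have hwnn : ∀ x ∈ Icc (0:ℝ) a, 0 ≤ w x := fun x hx => by
    have := hmle x hx; simp [hw_def]; linarith
  set H := fun x => (4/3 : ℝ) * (w x * Real.sqrt (w x)) with hH_def
  have hwder : ∀ x ∈ Icc (0:ℝ) a, HasDerivWithinAt w (d x) (Icc 0 a) x := by
    intro x hx
    exact ((hv.differentiableOn one_ne_zero x hx).hasDerivWithinAt).sub_const m
  have hHder : ∀ x ∈ Icc (0:ℝ) a,
      HasDerivWithinAt H (2 * Real.sqrt (w x) * d x) (Icc 0 a) x := by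
    intro x hx
    rcases eq_or_lt_of_le (hwnn x hx) with h0 | hpos
    · -- w x = 0
      have hwx : w x = 0 := h0.symm
      rw [hasDerivWithinAt_iff_tendsto_slope]
      have hslope : Filter.Tendsto (slope w x) (nhdsWithin x (Icc 0 a \ {x})) (nhds (d x)) :=
        hasDerivWithinAt_iff_tendsto_slope.mp (hwder x hx)
      have hsq : Filter.Tendsto (fun y => Real.sqrt (w y)) (nhdsWithin x (Icc 0 a \ {x}))
          (nhds 0) := by
        have hc : ContinuousWithinAt (fun y => Real.sqrt (w y)) (Icc 0 a) x :=
          (Real.continuous_sqrt.comp_continuousOn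
            (hvcont.sub continuousOn_const)).continuousWithinAt hx
        have := hc.tendsto
        rw [hwx, Real.sqrt_zero] at this
        exact this.mono_left (nhdsWithin_mono x diff_subset)
      have hT : Filter.Tendsto (fun y => (4/3 : ℝ) * slope w x y * Real.sqrt (w y))
          (nhdsWithin x (Icc 0 a \ {x})) (nhds ((4/3 * d x) * 0)) :=
        (hslope.const_mul (4/3)).mul hsq
      have hT' : Filter.Tendsto (fun y => (4/3 : ℝ) * slope w x y * Real.sqrt (w y))
          (nhdsWithin x (Icc 0 a \ {x})) (nhds (2 * Real.sqrt (w x) * d x)) := by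
        simpa [hwx] using hT
      refine hT'.congr' ?_
      filter_upwards [self_mem_nhdsWithin] with y hy
      have hyx : y ≠ x := by
        intro h; exact hy.2 (by simp [h])
      have : H x = 0 := by simp [hH_def, hwx]
      simp only [slope_def_field, hH_def, hwx, this]
      field_simp
      ring
    · -- w x > 0
      have hs0 : Real.sqrt (w x) ≠ 0 := by positivity
      have h1 : HasDerivWithinAt (fun y => w y * Real.sqrt (w y))
          (d x * Real.sqrt (w x) + w x * (d x / (2 * Real.sqrt (w x)))) (Icc 0 a) x :=
        (hwder x hx).mul ((hwder x hx).sqrt (ne_of_gt hpos))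
      have h2 := h1.const_mul (4/3 : ℝ)
      refine h2.congr_deriv ?_
      have hs2 : Real.sqrt (w x) ^ 2 = w x := Real.sq_sqrt hpos.le
      rw [show w x * (d x / (2 * Real.sqrt (w x))) = Real.sqrt (w x) * d x / 2 by
        rw [mul_div_assoc', div_eq_iff (mul_ne_zero two_ne_zero hs0)]; linear_combination (-d x) * hs2]
      ring
  have hx0a : x₀ ∈ Icc (0:ℝ) a := hx₀
  obtain ⟨hx₀0, hx₀a⟩ := hx₀
  -- continuity
  have hwcont : ContinuousOn w (Icc 0 a) := hvcont.sub continuousOn_const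
  have hscont : ContinuousOn (fun x => Real.sqrt (w x)) (Icc 0 a) :=
    Real.continuous_sqrt.comp_continuousOn hwcont
  have hHcont : ContinuousOn H (Icc 0 a) :=
    (continuousOn_const.mul (hwcont.mul hscont))
  have hGcont : ContinuousOn (fun x => v x / l + l * (d x) ^ 2) (Icc 0 a) :=
    (hvcont.div_const l).add (continuousOn_const.mul ((hdcont.pow 2)))
  have hFcont : ContinuousOn (fun x => m / l - 2 * Real.sqrt (w x) * d x) (Icc 0 a) :=
    continuousOn_const.sub ((continuousOn_const.mul hscont).mul hdcont)
  -- integrability on the two pieces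
  have hsub1 : Icc (0:ℝ) x₀ ⊆ Icc 0 a := Icc_subset_Icc le_rfl hx₀a
  have hsub2 : Icc x₀ a ⊆ Icc 0 a := Icc_subset_Icc hx₀0 le_rfl
  have hu1 : uIcc (0:ℝ) x₀ ⊆ Icc 0 a := by rw [uIcc_of_le hx₀0]; exact hsub1
  have hu2 : uIcc x₀ a ⊆ Icc 0 a := by rw [uIcc_of_le hx₀a]; exact hsub2
  have hIG1 : IntervalIntegrable (fun x => v x / l + l * (d x) ^ 2)
      MeasureTheory.volume 0 x₀ := (hGcont.mono hu1).intervalIntegrable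
  have hIG2 : IntervalIntegrable (fun x => v x / l + l * (d x) ^ 2)
      MeasureTheory.volume x₀ a := (hGcont.mono hu2).intervalIntegrable
  have hIF1 : IntervalIntegrable (fun x => m / l - 2 * Real.sqrt (w x) * d x)
      MeasureTheory.volume 0 x₀ := (hFcont.mono hu1).intervalIntegrable
  have hIsd : IntervalIntegrable (fun x => 2 * Real.sqrt (w x) * d x)
      MeasureTheory.volume 0 x₀ :=
    (((continuousOn_const.mul hscont).mul hdcont).mono hu1).intervalIntegrable
  -- FTC on [0, x₀]
  have hFTC : ∫ x in (0:ℝ)..x₀, 2 * Real.sqrt (w x) * d x = H x₀ - H 0 := by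
    apply integral_eq_sub_of_hasDerivAt_of_le hx₀0 (hHcont.mono hsub1)
    · intro x hx
      have hxmem : x ∈ Icc (0:ℝ) a := ⟨hx.1.le, hx.2.le.trans hx₀a⟩
      exact (hHder x hxmem).hasDerivAt (Icc_mem_nhds hx.1 (lt_of_lt_of_le hx.2 hx₀a))
    · exact hIsd
  have hHx₀ : H x₀ = 0 := by simp [hH_def, hw_def, hm_def]
  have hH0 : H 0 = 4/3 * ((1 - m) * Real.sqrt (1 - m)) := by
    simp [hH_def, hw_def, hv0]
  -- lower bound on [0, x₀]
  have hI1 : x₀ * (m / l) + (4/3 * ((1 - m) * Real.sqrt (1 - m)))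
      ≤ ∫ x in (0:ℝ)..x₀, (v x / l + l * (d x) ^ 2) := by
    have hmono : ∫ x in (0:ℝ)..x₀, (m / l - 2 * Real.sqrt (w x) * d x)
        ≤ ∫ x in (0:ℝ)..x₀, (v x / l + l * (d x) ^ 2) := by
      apply integral_mono_on hx₀0 hIF1 hIG1
      intro x hx
      have hxmem : x ∈ Icc (0:ℝ) a := hsub1 hx
      have hs2 : Real.sqrt (w x) ^ 2 = w x := Real.sq_sqrt (hwnn x hxmem)
      have hkey : 0 ≤ w x / l + l * d x ^ 2 + 2 * Real.sqrt (w x) * d x := by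
        have h := div_nonneg (sq_nonneg (Real.sqrt (w x) + l * d x)) hl.le
        have hexp : (Real.sqrt (w x) + l * d x) ^ 2 / l
            = w x / l + l * d x ^ 2 + 2 * Real.sqrt (w x) * d x := by
          rw [div_eq_iff hl.ne', add_mul, add_mul, div_mul_cancel₀ _ hl.ne']; linear_combination hs2
        linarith [hexp ▸ h]
      have hwv : w x / l = v x / l - m / l := by
        simp [hw_def, sub_div]
      linarith
    have hcalc : ∫ x in (0:ℝ)..x₀, (m / l - 2 * Real.sqrt (w x) * d x)
        = x₀ * (m / l) + 4/3 * ((1 - m) * Real.sqrt (1 - m)) := by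
      rw [integral_sub intervalIntegrable_const hIsd, hFTC, hHx₀, hH0,
        integral_const]
      simp [smul_eq_mul]
    linarith [hcalc ▸ hmono]
  -- lower bound on [x₀, a]
  have hI2 : (a - x₀) * (m / l) ≤ ∫ x in x₀..a, (v x / l + l * (d x) ^ 2) := by
    have hmono : ∫ x in x₀..a, (fun _ : ℝ => m / l) x
        ≤ ∫ x in x₀..a, (v x / l + l * (d x) ^ 2) := by
      apply integral_mono_on hx₀a intervalIntegrable_const hIG2
      intro x hx
      have hxmem : x ∈ Icc (0:ℝ) a := hsub2 hx
      have h1 : m / l ≤ v x / l := by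
        gcongr
        exact hmle x hxmem
      nlinarith [sq_nonneg (d x), hl.le]
    rwa [integral_const, smul_eq_mul] at hmono
  -- combine
  have hsplit : ∫ x in (0:ℝ)..a, (v x / l + l * (d x) ^ 2)
      = (∫ x in (0:ℝ)..x₀, (v x / l + l * (d x) ^ 2))
        + ∫ x in x₀..a, (v x / l + l * (d x) ^ 2) :=
    (integral_add_adjacent_intervals hIG1 hIG2).symm
  have htot : a * (m / l) + 4/3 * ((1 - m) * Real.sqrt (1 - m))
      ≤ ∫ x in (0:ℝ)..a, (v x / l + l * (d x) ^ 2) := by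
    rw [hsplit]; linarith
  -- final elementary inequality
  set t := Real.sqrt (1 - m) with ht_def
  have ht2 : t ^ 2 = 1 - m := Real.sq_sqrt (by linarith)
  have ht0 : 0 ≤ t := Real.sqrt_nonneg _
  have ht1 : t ≤ 1 := Real.sqrt_le_one.mpr (by linarith)
  have haml : 2 * m ≤ a * (m / l) := by
    have h1 : 2 * l * (m / l) ≤ a * (m / l) :=
      mul_le_mul_of_nonneg_right ha (div_nonneg hm0 hl.le)
    have h2 : 2 * l * (m / l) = 2 * m := by field_simp
    linarith
  have hfin : 4/3 ≤ 2 * m + 4/3 * ((1 - m) * t) := by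
    nlinarith [mul_nonneg (sq_nonneg (t - 1)) (by linarith : (0:ℝ) ≤ 2 * t + 1)]
  have : 4/3 ≤ ∫ x in (0:ℝ)..a, (v x / l + l * (d x) ^ 2) := by linarith
  linarith

lemma at1_value (l a : ℝ) (hl : 0 < l) (ha : 2 * l ≤ a)
    (φ : ℝ → ℝ)
    (hφ : φ = fun x => if x < 2 * l then (1 - x / (2 * l)) ^ 2 else 0) :
    (3 / 8) * ∫ x in (0:ℝ)..a, (φ x / l + l * (deriv φ x) ^ 2) = 1 / 2 := by
  have h2l : 0 < 2 * l := by linarith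
  have h2l' : (2 : ℝ) * l ≠ 0 := ne_of_gt h2l
  have ha0 : (0:ℝ) ≤ a := by linarith
  have hφ2l : φ (2 * l) = 0 := by rw [hφ]; simp
  -- derivative for x < 2l
  have dlt : ∀ x : ℝ, x < 2 * l → deriv φ x = -((1 - x / (2 * l)) / l) := by
    intro x hx
    have hev : φ =ᶠ[nhds x] fun y => (1 - y / (2 * l)) ^ 2 := by
      filter_upwards [Iio_mem_nhds hx] with y hy
      simp [hφ, show y < 2 * l from hy]
    rw [hev.deriv_eq]
    have hD : HasDerivAt (fun y => (1 - y / (2 * l)) ^ 2)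
        ((2 : ℕ) * (1 - x / (2 * l)) ^ 1 * (-(1 / (2 * l)))) x :=
      (((hasDerivAt_id x).div_const (2 * l)).const_sub 1).pow 2
    rw [hD.deriv]
    field_simp
    ring
  -- derivative for x > 2l
  have dgt : ∀ x : ℝ, 2 * l < x → deriv φ x = 0 := by
    intro x hx
    have hev : φ =ᶠ[nhds x] fun _ => (0:ℝ) := by
      filter_upwards [Ioi_mem_nhds hx] with y hy
      simp [hφ, if_neg (not_lt.mpr (le_of_lt (mem_Ioi.mp hy)))]
    rw [hev.deriv_eq]
    exact deriv_const x 0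
  -- derivative at 2l
  have dat : deriv φ (2 * l) = 0 := by
    have hbound : ∀ y : ℝ, ‖slope φ (2 * l) y‖ ≤ |y - 2 * l| / (4 * l ^ 2) := by
      intro y
      rcases lt_or_ge y (2 * l) with hy | hy
      · have hφy : φ y = (y - 2 * l) ^ 2 / (4 * l ^ 2) := by
          rw [hφ]; simp only [if_pos hy]; field_simp; ring
        have hyne : y - 2 * l ≠ 0 := sub_ne_zero.mpr (ne_of_lt hy)
        have hval : slope φ (2 * l) y = (y - 2 * l) / (4 * l ^ 2) := by
          rw [slope_def_field, hφy, hφ2l]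
          field_simp
          ring
        rw [hval, Real.norm_eq_abs, abs_div,
          abs_of_pos (by positivity : (0:ℝ) < 4 * l ^ 2)]
      · have hφy : φ y = 0 := by rw [hφ]; simp [if_neg (not_lt.mpr hy)]
        rw [slope_def_field, hφy, hφ2l]
        simp
        positivity
    have hg0 : Filter.Tendsto (fun y : ℝ => |y - 2 * l| / (4 * l ^ 2))
        (nhdsWithin (2 * l) {2 * l}ᶜ) (nhds 0) := by
      have hcont : Continuous (fun y : ℝ => |y - 2 * l| / (4 * l ^ 2)) := by
        continuity
      have := hcont.tendsto (2 * l)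
      simp only [sub_self, abs_zero, zero_div] at this
      exact this.mono_left nhdsWithin_le_nhds
    have hHD : HasDerivAt φ 0 (2 * l) := by
      rw [hasDerivAt_iff_tendsto_slope]
      exact squeeze_zero_norm (fun y => hbound y) hg0
    exact hHD.deriv
  -- rewrite integrand as a nicer piecewise function
  set g' : ℝ → ℝ := fun x => if x < 2 * l then 2 / l * (1 - x / (2 * l)) ^ 2 else 0
    with hg'_def
  have heq : EqOn (fun x => φ x / l + l * (deriv φ x) ^ 2) g' (uIcc 0 a) := by
    intro x hx
    by_cases hxlt : x < 2 * l
    · show φ x / l + l * (deriv φ x) ^ 2 = g' x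
      rw [dlt x hxlt, hφ]
      simp only [hg'_def, if_pos hxlt]
      field_simp
      ring
    · push_neg at hxlt
      rcases eq_or_lt_of_le hxlt with heq2 | hgt
      · show φ x / l + l * (deriv φ x) ^ 2 = g' x
        rw [← heq2, dat, hφ2l]
        simp [hg'_def]
      · show φ x / l + l * (deriv φ x) ^ 2 = g' x
        rw [dgt x hgt, hφ]
        simp [hg'_def, if_neg (not_lt.mpr hxlt)]
  have hstep1 : ∫ x in (0:ℝ)..a, (φ x / l + l * (deriv φ x) ^ 2)
      = ∫ x in (0:ℝ)..a, g' x := integral_congr heq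
  -- the smooth model on [0, 2l]
  set g : ℝ → ℝ := fun x => 2 / l * (1 - x / (2 * l)) ^ 2 with hg_def
  have hgcont : Continuous g := by
    apply Continuous.mul continuous_const
    exact (continuous_const.sub (continuous_id.div_const _)).pow 2
  have heqg : EqOn g' g (Icc 0 (2 * l)) := by
    intro x hx
    by_cases hxlt : x < 2 * l
    · simp [hg'_def, hg_def, if_pos hxlt]
    · have hx2 : x = 2 * l := le_antisymm hx.2 (not_lt.mp hxlt)
      show g' x = g x
      rw [hx2]
      simp only [hg'_def, hg_def, if_neg (lt_irrefl (2 * l)), div_self h2l']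
      norm_num
  have heq0 : EqOn g' (fun _ => (0:ℝ)) (Icc (2 * l) a) := by
    intro x hx
    simp [hg'_def, if_neg (not_lt.mpr hx.1)]
  have hc1 : ContinuousOn g' (Icc 0 (2 * l)) := hgcont.continuousOn.congr heqg
  have hc2 : ContinuousOn g' (Icc (2 * l) a) := continuousOn_const.congr heq0
  have hi1 : IntervalIntegrable g' MeasureTheory.volume 0 (2 * l) := by
    rw [intervalIntegrable_iff_integrableOn_Icc_of_le h2l.le]
    exact hc1.integrableOn_compact isCompact_Icc
  have hi2 : IntervalIntegrable g' MeasureTheory.volume (2 * l) a := by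
    rw [intervalIntegrable_iff_integrableOn_Icc_of_le ha]
    exact hc2.integrableOn_compact isCompact_Icc
  -- value on [0, 2l] via FTC
  have hder : ∀ x ∈ uIcc (0:ℝ) (2 * l),
      HasDerivAt (fun x : ℝ => -(4/3 : ℝ) * (1 - x / (2 * l)) ^ 3) (g x) x := by
    intro x hx
    have hD : HasDerivAt (fun y => (1 - y / (2 * l)) ^ 3)
        ((3 : ℕ) * (1 - x / (2 * l)) ^ 2 * (-(1 / (2 * l)))) x :=
      (((hasDerivAt_id x).div_const (2 * l)).const_sub 1).pow 3
    have h3 := hD.const_mul (-(4/3) : ℝ)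
    refine h3.congr_deriv ?_
    simp only [hg_def]
    field_simp
    ring
  have hFTC := integral_eq_sub_of_hasDerivAt hder (hgcont.intervalIntegrable 0 (2 * l))
  have hval1 : ∫ x in (0:ℝ)..(2 * l), g' x = 4 / 3 := by
    rw [integral_congr (by rwa [uIcc_of_le h2l.le] : EqOn g' g (uIcc 0 (2 * l))), hFTC]
    rw [div_self h2l']
    norm_num
  have hval2 : ∫ x in (2 * l)..a, g' x = 0 := by
    rw [integral_congr (by rwa [uIcc_of_le ha] : EqOn g' (fun _ => (0:ℝ)) (uIcc (2 * l) a))]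
    simp
  have hsplit : ∫ x in (0:ℝ)..a, g' x = 4 / 3 := by
    rw [← integral_add_adjacent_intervals hi1 hi2, hval1, hval2]
    norm_num
  rw [hstep1, hsplit]
  norm_num

/-- The AT1 phase-field profile `φ` minimizes the AT1 crack
surface functional `Γ(v) = (3/8)·∫₀ᵃ (v/l + l·(v')²) dx` over continuously
differentiable functions on `[0,a]` with `v(0) = 1` and `v ≥ 0`: every such `v`
satisfies `Γ(v) ≥ 1/2`, and equality holds for `v = φ`. -/
theorem at1_profile_minimizer
    (l a : ℝ) (hl : 0 < l) (ha : 2 * l ≤ a)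
    (φ : ℝ → ℝ)
    (hφ : φ = fun x => if x < 2 * l then (1 - x / (2 * l)) ^ 2 else 0) :
    (∀ v : ℝ → ℝ, ContDiffOn ℝ 1 v (Set.Icc 0 a) → v 0 = 1 →
      (∀ x ∈ Set.Icc (0 : ℝ) a, 0 ≤ v x) →
      (3 / 8) * ∫ x in (0 : ℝ)..a,
          (v x / l + l * (derivWithin v (Set.Icc 0 a) x) ^ 2)
        ≥ 1 / 2) ∧
    (3 / 8) * ∫ x in (0 : ℝ)..a,
        (φ x / l + l * (deriv φ x) ^ 2)
      = 1 / 2 := by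
  exact ⟨fun v h1 h2 h3 => at1_lower l a hl ha v h1 h2 h3,
    at1_value l a hl ha φ hφ⟩
end
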